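/- arXiv:2007.03571 — 5 statements merged into one kernel-verified Lean document; each statement's English description precedes it below -/
import Mathlib

section
/- The probability generating function of the NDOPPE distribution: for |s| < 1/(1−θ), E[s^X] = (Σ_{k=0}^r a_k k!/(1−(1−θ)s)^{k+1}) / (Σ_{k=0}^r a_k k!/θ^{k+1}). -/
open Finset

/-- The polynomial part p(x) = ∑_{k=0}^r a_k · k! · C(x+k, x) of the NDOPPE pmf. -/
noncomputable def ndoppeP (a : ℕ → ℝ) (r : ℕ) (x : ℕ) : ℝ :=
  ∑ k ∈ Finset.range (r + 1), a k * (Nat.factorial k) * ((x + k).choose x)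

/-- The normalizing constant h(θ) = (∑_{k=0}^r a_k · k! / θ^{k+1})⁻¹. -/
noncomputable def ndoppeH (θ : ℝ) (a : ℕ → ℝ) (r : ℕ) : ℝ :=
  (∑ k ∈ Finset.range (r + 1), a k * (Nat.factorial k) / θ ^ (k + 1))⁻¹

/-- The NDOPPE pmf p(x;θ) = h(θ)·p(x)·(1−θ)^x. -/
noncomputable def ndoppePMF (θ : ℝ) (a : ℕ → ℝ) (r : ℕ) (x : ℕ) : ℝ :=
  ndoppeH θ a r * ndoppeP a r x * (1 - θ) ^ x

/-! Each summand `a k · k! · C(x+k, x) · ((1 - θ) s)^x` is a term of the negative binomial series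
`∑ₙ C(n+k, n) tⁿ = 1 / (1 - t)^(k+1)`, which converges for `|t| < 1`; the hypothesis on `s` is exactly
`|(1 - θ) s| < 1`. Summing these `r + 1` series and multiplying by `h(θ)` gives the formula. -/

theorem hasSum_sum_mul_choose_mul_geometric {𝕜 : Type*} [NormedDivisionRing 𝕜]
    [HasSummableGeomSeries 𝕜] (c : ℕ → 𝕜) (s : Finset ℕ) {t : 𝕜} (ht : ‖t‖ < 1) :
    HasSum (fun n ↦ ∑ k ∈ s, c k * (n + k).choose n * t ^ n)
      (∑ k ∈ s, c k / (1 - t) ^ (k + 1)) := by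
  refine hasSum_sum fun k _ ↦ ?_
  simp only [Nat.choose_symm_add, mul_assoc, div_eq_mul_one_div (c k)]
  exact (hasSum_choose_mul_geometric_of_norm_lt_one k ht).mul_left (c k)

theorem pow_mul_ndoppePMF (θ : ℝ) (a : ℕ → ℝ) (r : ℕ) (s : ℝ) (x : ℕ) :
    s ^ x * ndoppePMF θ a r x = ndoppeH θ a r *
      ∑ k ∈ range (r + 1), a k * (Nat.factorial k) * ((x + k).choose x) * ((1 - θ) * s) ^ x := by
  rw [ndoppePMF, ndoppeP, ← sum_mul, mul_pow]
  ring

theorem ndoppe_pgf_general (θ : ℝ) (a : ℕ → ℝ) (r : ℕ) (s : ℝ)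
    (hθ1 : θ < 1) (hs : |s| < 1 / (1 - θ)) :
    ∑' x : ℕ, s ^ x * ndoppePMF θ a r x =
      (∑ k ∈ Finset.range (r + 1),
          a k * (Nat.factorial k) / (1 - (1 - θ) * s) ^ (k + 1)) /
        (∑ k ∈ Finset.range (r + 1), a k * (Nat.factorial k) / θ ^ (k + 1)) := by
  have h1θ : 0 < 1 - θ := sub_pos.mpr hθ1
  have ht : ‖(1 - θ) * s‖ < 1 := by
    rwa [Real.norm_eq_abs, abs_mul, abs_of_pos h1θ, ← lt_div_iff₀' h1θ]
  simp_rw [pow_mul_ndoppePMF]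
  rw [((hasSum_sum_mul_choose_mul_geometric (fun k ↦ a k * (Nat.factorial k)) _ ht).mul_left
    (ndoppeH θ a r)).tsum_eq, ndoppeH, inv_mul_eq_div]

theorem ndoppe_pgf (θ : ℝ) (a : ℕ → ℝ) (r : ℕ) (s : ℝ)
    (hθ0 : 0 < θ) (hθ1 : θ < 1) (ha : ∀ k, 0 ≤ a k)
    (hpos : ∃ k ≤ r, 0 < a k) (hs : |s| < 1 / (1 - θ)) :
    ∑' x : ℕ, s ^ x * ndoppePMF θ a r x =
      (∑ k ∈ Finset.range (r + 1),
          a k * (Nat.factorial k) / (1 - (1 - θ) * s) ^ (k + 1)) /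
        (∑ k ∈ Finset.range (r + 1), a k * (Nat.factorial k) / θ ^ (k + 1)) :=
  ndoppe_pgf_general θ a r s hθ1 hs
end

section
/- The m-th factorial moment of the NDOPPE distribution is E[X(X−1)⋯(X−m+1)] = h(θ)·((1−θ)/θ)^m · Σ_{k=0}^r a_k (m+k)!/θ^{k+1}. -/
open Finset

/-!
The falling factorial `x (x - 1) ⋯ (x - m + 1)` vanishes for `x < m`, and for `x = y + m` the
identity `(y + m)ₘ · k! · C(y + m + k, k) = (m + k)! · C(y + m + k, m + k)` turns the `k`-th
component of the series into `(m + k)! q^m` times the negative binomial series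
`∑_y C(y + n, n) q^y = (1 - q)^{-(n + 1)}` with `n = m + k` and `q = 1 - θ`.
-/

open Nat in
theorem descFactorial_mul_factorial_mul_add_choose (y m k : ℕ) :
    (y + m).descFactorial m * (k ! * (y + m + k).choose k) =
      (m + k)! * (y + (m + k)).choose (m + k) := by
  have hdesc : y ! * (y + m).descFactorial m = (y + m)! := by
    simpa using factorial_mul_descFactorial (le_add_left m y)
  refine Nat.eq_of_mul_eq_mul_left y.factorial_pos ?_
  calc y ! * ((y + m).descFactorial m * (k ! * (y + m + k).choose k))
      = (y + m + k).choose k * (y + m)! * k ! := by rw [← hdesc]; ring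
    _ = (y + (m + k))! := by rw [add_choose_mul_factorial_mul_factorial, add_assoc]
    _ = y ! * ((m + k)! * (y + (m + k)).choose (m + k)) := by
      rw [← add_choose_mul_factorial_mul_factorial y (m + k)]; ring

theorem prod_range_natCast_sub_eq_descFactorial {R : Type*} [CommRing R] (n m : ℕ) :
    ∏ i ∈ range m, ((n : R) - i) = n.descFactorial m := by
  rw [← descPochhammer_eval_eq_prod_range, descPochhammer_eval_eq_descFactorial]

open Nat in
theorem hasSum_descFactorial_mul_factorial_mul_choose_mul_geometric {𝕜 : Type*}
    [NormedDivisionRing 𝕜] (m k : ℕ) {q : 𝕜} (hq : ‖q‖ < 1) :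
    HasSum (fun x : ℕ ↦ ((x.descFactorial m * (k ! * (x + k).choose k) : ℕ) : 𝕜) * q ^ x)
      ((m + k)! * q ^ m / (1 - q) ^ (m + k + 1)) := by
  refine (hasSum_nat_add_iff' m).1 ?_
  have hvanish :
      ∑ x ∈ range m, ((x.descFactorial m * (k ! * (x + k).choose k) : ℕ) : 𝕜) * q ^ x = 0 :=
    sum_eq_zero fun x hx ↦ by simp [descFactorial_of_lt (mem_range.1 hx)]
  rw [hvanish, sub_zero, div_eq_mul_one_div]
  refine ((hasSum_choose_mul_geometric_of_norm_lt_one (m + k) hq).mul_left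
    ((m + k)! * q ^ m)).congr_fun fun y ↦ ?_
  rw [descFactorial_mul_factorial_mul_add_choose, Nat.cast_mul, pow_add, pow_mul_comm, mul_assoc,
    ← mul_assoc (_ : 𝕜) (q ^ m), (Nat.cast_commute _ (q ^ m)).eq]
  simp only [mul_assoc]

theorem hasSum_descFactorial_mul_ndoppeP_mul_geometric (a : ℕ → ℝ) (r m : ℕ) {q : ℝ}
    (hq : ‖q‖ < 1) :
    HasSum (fun x : ℕ ↦ x.descFactorial m * ndoppeP a r x * q ^ x)
      (∑ k ∈ range (r + 1), a k * ((m + k).factorial * q ^ m / (1 - q) ^ (m + k + 1))) := by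
  refine (hasSum_sum fun k _ ↦ (hasSum_descFactorial_mul_factorial_mul_choose_mul_geometric
    m k hq).mul_left (a k)).congr_fun fun x ↦ ?_
  simp only [ndoppeP, mul_sum, sum_mul]
  refine sum_congr rfl fun k _ ↦ ?_
  rw [Nat.choose_symm_add]
  push_cast
  ring

theorem ndoppe_factorial_moment_general (θ : ℝ) (a : ℕ → ℝ) (r : ℕ) (m : ℕ)
    (hθ0 : 0 < θ) (hθ1 : θ < 1) :
    ∑' x : ℕ, (∏ i ∈ Finset.range m, ((x : ℝ) - i)) * ndoppePMF θ a r x =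
      ndoppeH θ a r * ((1 - θ) / θ) ^ m *
        ∑ k ∈ Finset.range (r + 1), a k * (Nat.factorial (m + k)) / θ ^ (k + 1) := by
  have hq : ‖1 - θ‖ < 1 := by
    rw [Real.norm_eq_abs, abs_lt]
    constructor <;> linarith
  have hmoment :=
    (hasSum_descFactorial_mul_ndoppeP_mul_geometric a r m hq).mul_left (ndoppeH θ a r)
  simp only [prod_range_natCast_sub_eq_descFactorial, ndoppePMF]
  rw [(hmoment.congr_fun fun x ↦ by ring).tsum_eq, sub_sub_cancel, mul_sum, mul_sum]
  refine sum_congr rfl fun k _ ↦ ?_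
  rw [div_pow]
  field_simp
  ring

theorem ndoppe_factorial_moment (θ : ℝ) (a : ℕ → ℝ) (r : ℕ) (m : ℕ)
    (hθ0 : 0 < θ) (hθ1 : θ < 1) (ha : ∀ k, 0 ≤ a k)
    (hpos : ∃ k ≤ r, 0 < a k) (hm : 1 ≤ m) :
    ∑' x : ℕ, (∏ i ∈ Finset.range m, ((x : ℝ) - i)) * ndoppePMF θ a r x =
      ndoppeH θ a r * ((1 - θ) / θ) ^ m *
        ∑ k ∈ Finset.range (r + 1), a k * (Nat.factorial (m + k)) / θ ^ (k + 1) :=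
  ndoppe_factorial_moment_general θ a r m hθ0 hθ1
end

section
/- Stochastic ordering of NDOPPE: if 0 < θ₁ ≤ θ₂ < 1, then for all t ∈ ℕ, F(t;θ₁) ≤ F(t;θ₂), where F(·;θ) is the NDOPPE cdf; i.e., NDOPPE(θ₂) is stochastically smaller than NDOPPE(θ₁). -/
/-! Up to normalization the pmf at `θ` is `ndoppeP a r x * (1 - θ) ^ x`, so for `θ₁ ≤ θ₂` the
likelihood ratio `p(x; θ₂) / p(x; θ₁) ∝ ((1 - θ₂) / (1 - θ₁)) ^ x` is decreasing in `x`. A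
decreasing likelihood ratio gives the cdf inequality: after cross-multiplying, each head term of
one distribution times each tail term of the other compares the right way. The normalizing
constant is a finite combination of negative binomial series
`∑ₓ C(x + k, k) qˣ = (1 - q)^{-(k+1)}`. -/

open Finset

theorem sum_range_mul_tsum_le_of_mul_le_mul {u v : ℕ → ℝ} (hu : Summable u) (hv : Summable v)
    (t : ℕ) (h : ∀ x ≤ t, ∀ y, t < y → u x * v y ≤ v x * u y) :
    (∑ x ∈ range (t + 1), u x) * ∑' x, v x ≤ (∑ x ∈ range (t + 1), v x) * ∑' x, u x := by
  rw [← hu.sum_add_tsum_nat_add (t + 1), ← hv.sum_add_tsum_nat_add (t + 1)]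
  have tails : (∑ x ∈ range (t + 1), u x) * ∑' j, v (j + (t + 1)) ≤
      (∑ x ∈ range (t + 1), v x) * ∑' j, u (j + (t + 1)) := by
    rw [sum_mul, sum_mul]
    refine sum_le_sum fun x hx => ?_
    rw [← tsum_mul_left, ← tsum_mul_left]
    exact Summable.tsum_le_tsum
      (fun j => h x (Nat.lt_succ_iff.1 (mem_range.1 hx)) (j + (t + 1)) (by omega))
      (((summable_nat_add_iff _).2 hv).mul_left _) (((summable_nat_add_iff _).2 hu).mul_left _)
  linarith

theorem pow_mul_pow_le_pow_mul_pow {R : Type*} [CommSemiring R] [PartialOrder R]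
    [IsOrderedRing R] {b c : R} (hb : 0 ≤ b) (hbc : b ≤ c) {x y : ℕ} (hxy : x ≤ y) :
    c ^ x * b ^ y ≤ b ^ x * c ^ y := by
  obtain ⟨m, rfl⟩ := Nat.exists_eq_add_of_le hxy
  have hc : 0 ≤ c := hb.trans hbc
  rw [pow_add, pow_add, mul_left_comm]
  gcongr

section

variable {a : ℕ → ℝ} {r : ℕ}

theorem ndoppeP_nonneg (ha : ∀ k, 0 ≤ a k) (x : ℕ) : 0 ≤ ndoppeP a r x :=
  sum_nonneg fun k _ => by have := ha k; positivity

theorem ndoppeP_pos (ha : ∀ k, 0 ≤ a k) (hpos : ∃ k ≤ r, 0 < a k) (x : ℕ) :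
    0 < ndoppeP a r x := by
  obtain ⟨k, hkr, hak⟩ := hpos
  refine sum_pos' (fun i _ => by have := ha i; positivity) ⟨k, mem_range.2 (by omega), ?_⟩
  have : 0 < (x + k).choose x := Nat.choose_pos (Nat.le_add_right x k)
  positivity

theorem hasSum_ndoppeP_mul_pow {θ : ℝ} (hθ₀ : 0 < θ) (hθ₁ : θ < 1) :
    HasSum (fun x => ndoppeP a r x * (1 - θ) ^ x) (ndoppeH θ a r)⁻¹ := by
  have hq : ‖1 - θ‖ < 1 := by rw [Real.norm_eq_abs, abs_lt]; constructor <;> linarith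
  rw [ndoppeH, inv_inv]
  simp only [ndoppeP, sum_mul]
  refine hasSum_sum fun k _ => ?_
  have h := (hasSum_choose_mul_geometric_of_norm_lt_one k hq).mul_left (a k * k.factorial)
  rw [sub_sub_cancel, mul_one_div] at h
  refine h.congr_fun fun x => ?_
  rw [Nat.choose_symm_add]
  ring

theorem sum_range_ndoppePMF {θ : ℝ} (hθ₀ : 0 < θ) (hθ₁ : θ < 1) (t : ℕ) :
    ∑ x ∈ range (t + 1), ndoppePMF θ a r x =
      (∑ x ∈ range (t + 1), ndoppeP a r x * (1 - θ) ^ x) /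
        ∑' x, ndoppeP a r x * (1 - θ) ^ x := by
  rw [(hasSum_ndoppeP_mul_pow hθ₀ hθ₁).tsum_eq, div_inv_eq_mul, sum_mul]
  exact sum_congr rfl fun x _ => by rw [ndoppePMF]; ring

theorem tsum_ndoppeP_mul_pow_pos (ha : ∀ k, 0 ≤ a k) (hpos : ∃ k ≤ r, 0 < a k) {θ : ℝ}
    (hθ₀ : 0 < θ) (hθ₁ : θ < 1) : 0 < ∑' x, ndoppeP a r x * (1 - θ) ^ x :=
  (hasSum_ndoppeP_mul_pow hθ₀ hθ₁).summable.tsum_pos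
    (fun x => mul_nonneg (ndoppeP_nonneg ha x) (pow_nonneg (by linarith) x)) 0
    (by simpa using ndoppeP_pos ha hpos 0)

end

theorem ndoppe_stochastic_order (θ₁ θ₂ : ℝ) (a : ℕ → ℝ) (r : ℕ)
    (hθ1 : 0 < θ₁) (h12 : θ₁ ≤ θ₂) (hθ2 : θ₂ < 1) (ha : ∀ k, 0 ≤ a k)
    (hpos : ∃ k ≤ r, 0 < a k) (t : ℕ) :
    ∑ x ∈ Finset.range (t + 1), ndoppePMF θ₁ a r x ≤
      ∑ x ∈ Finset.range (t + 1), ndoppePMF θ₂ a r x := by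
  have hθ1' : θ₁ < 1 := h12.trans_lt hθ2
  have hθ2' : 0 < θ₂ := hθ1.trans_le h12
  rw [sum_range_ndoppePMF hθ1 hθ1', sum_range_ndoppePMF hθ2' hθ2,
    div_le_div_iff₀ (tsum_ndoppeP_mul_pow_pos ha hpos hθ1 hθ1')
      (tsum_ndoppeP_mul_pow_pos ha hpos hθ2' hθ2)]
  refine sum_range_mul_tsum_le_of_mul_le_mul (hasSum_ndoppeP_mul_pow hθ1 hθ1').summable
    (hasSum_ndoppeP_mul_pow hθ2' hθ2).summable t fun x hx y hy => ?_
  have hratio : (1 - θ₁) ^ x * (1 - θ₂) ^ y ≤ (1 - θ₂) ^ x * (1 - θ₁) ^ y :=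
    pow_mul_pow_le_pow_mul_pow (by linarith) (by linarith) (by omega)
  have hPP := mul_nonneg (ndoppeP_nonneg (r := r) ha x) (ndoppeP_nonneg (r := r) ha y)
  linarith [mul_le_mul_of_nonneg_left hratio hPP]
end

section
/- Index of dispersion exceeds one: for X ~ NDOPPE(θ) with 0 < θ < 1, Var(X)/E(X) ≥ 1, i.e., the distribution is over-dispersed. -/
open Finset

/-!
X is a mixture of the negative binomials NB(k+1, θ), k ≤ r, with weights proportional to
a_k k! / θ^(k+1); let K be the mixing index. Shifting the summation index by j turns the
j-th factorial moment of NB(k+1, θ) into a multiple of the total mass of NB(k+j+1, θ), so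
E[X(X-1)⋯(X-j+1)] = ((1-θ)/θ)^j E[(K+1)(K+2)⋯(K+j)]. Hence
Var X - E X = E[X(X-1)] - (E X)² = ((1-θ)/θ)² (E[(K+1)(K+2)] - E[K+1]²),
which is nonnegative by Cauchy–Schwarz because (K+1)(K+2) ≥ (K+1)².
-/

open scoped Nat

theorem add_descFactorial_mul_choose (m j k : ℕ) :
    (m + j).descFactorial j * (m + j + k).choose (m + j) =
      (k + 1).ascFactorial j * (m + (k + j)).choose (k + j) := by
  have hm := Nat.factorial_mul_ascFactorial m j
  have hk := Nat.factorial_mul_ascFactorial k j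
  have h₁ := Nat.add_choose_mul_factorial_mul_factorial k (m + j)
  have h₂ := Nat.add_choose_mul_factorial_mul_factorial m (k + j)
  rw [add_comm k (m + j)] at h₁
  rw [Nat.add_descFactorial_eq_ascFactorial]
  refine Nat.eq_of_mul_eq_mul_right (Nat.mul_pos (Nat.factorial_pos m) (Nat.factorial_pos k)) ?_
  calc (m + 1).ascFactorial j * (m + j + k).choose (m + j) * (m ! * k !)
      = (m + j + k).choose (m + j) * (m ! * (m + 1).ascFactorial j) * k ! := by ring
    _ = (m + (k + j))! := by rw [hm, mul_right_comm, h₁]; ring_nf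
    _ = (k + 1).ascFactorial j * (m + (k + j)).choose (k + j) * (m ! * k !) := by
      rw [← h₂, ← hk]; ring

theorem hasSum_descFactorial_mul_choose_mul_geometric {𝕜 : Type*} [NormedField 𝕜] {q : 𝕜}
    (hq : ‖q‖ < 1) (k j : ℕ) :
    HasSum (fun n : ℕ ↦ (n.descFactorial j : 𝕜) * (n + k).choose n * q ^ n)
      ((k + 1).ascFactorial j * q ^ j / (1 - q) ^ (k + j + 1)) := by
  have hgeom := (hasSum_choose_mul_geometric_of_norm_lt_one (k + j) hq).mul_left
    ((k + 1).ascFactorial j * q ^ j : 𝕜)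
  have hlow : ∑ i ∈ range j, (i.descFactorial j : 𝕜) * (i + k).choose i * q ^ i = 0 :=
    sum_eq_zero fun i hi ↦ by rw [Nat.descFactorial_of_lt (mem_range.mp hi)]; simp
  refine (hasSum_nat_add_iff' j).mp ?_
  rw [hlow, sub_zero, ← mul_one_div]
  refine hgeom.congr_fun fun m ↦ ?_
  have h := congrArg (Nat.cast : ℕ → 𝕜) (add_descFactorial_mul_choose m j k)
  push_cast at h
  rw [pow_add]
  linear_combination (q ^ m * q ^ j) * h

theorem sq_sum_mul_le_sum_mul_sum_mul_add_one {ι R : Type*} [CommRing R] [LinearOrder R]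
    [IsStrictOrderedRing R] (s : Finset ι) {c x : ι → R} (hc : ∀ i ∈ s, 0 ≤ c i)
    (hx : ∀ i ∈ s, 0 ≤ x i) :
    (∑ i ∈ s, c i * x i) ^ 2 ≤ (∑ i ∈ s, c i) * ∑ i ∈ s, c i * (x i * (x i + 1)) := by
  refine sum_sq_le_sum_mul_sum_of_sq_le_mul s hc (fun i hi ↦ ?_) fun i hi ↦ ?_
  · have := hc i hi; have := hx i hi; positivity
  · have hci := hc i hi; have hxi := hx i hi
    nlinarith [mul_nonneg (mul_nonneg hxi hci) hci]

/-- The weight of NB(k+1, θ) in the NDOPPE mixture, before normalisation by `ndoppeH`. -/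
noncomputable def ndoppeWeight (θ : ℝ) (a : ℕ → ℝ) (k : ℕ) : ℝ :=
  a k * k ! / θ ^ (k + 1)

section Weights

variable {θ : ℝ} {a : ℕ → ℝ}

theorem ndoppeH_eq (r : ℕ) :
    ndoppeH θ a r = (∑ k ∈ range (r + 1), ndoppeWeight θ a k)⁻¹ :=
  rfl

theorem ndoppeWeight_nonneg (hθ : 0 ≤ θ) (ha : ∀ k, 0 ≤ a k) (k : ℕ) :
    0 ≤ ndoppeWeight θ a k := by
  have := ha k
  unfold ndoppeWeight
  positivity

theorem sum_ndoppeWeight_mul_pos (hθ : 0 < θ) (ha : ∀ k, 0 ≤ a k) {r : ℕ}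
    (hpos : ∃ k ≤ r, 0 < a k) {f : ℕ → ℝ} (hf : ∀ k, 0 < f k) :
    0 < ∑ k ∈ range (r + 1), ndoppeWeight θ a k * f k := by
  obtain ⟨k₀, hk₀, hak₀⟩ := hpos
  refine sum_pos' (fun k _ ↦ mul_nonneg (ndoppeWeight_nonneg hθ.le ha k) (hf k).le)
    ⟨k₀, mem_range.mpr (by omega), mul_pos ?_ (hf k₀)⟩
  unfold ndoppeWeight
  positivity

theorem ndoppeH_pos (hθ : 0 < θ) (ha : ∀ k, 0 ≤ a k) {r : ℕ} (hpos : ∃ k ≤ r, 0 < a k) :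
    0 < ndoppeH θ a r := by
  rw [ndoppeH_eq, inv_pos]
  simpa using sum_ndoppeWeight_mul_pos hθ ha hpos (f := 1) fun _ ↦ one_pos

theorem sq_ndoppeH_mul_sum_le (hθ : 0 ≤ θ) (ha : ∀ k, 0 ≤ a k) (r : ℕ) :
    (ndoppeH θ a r * ∑ k ∈ range (r + 1), ndoppeWeight θ a k * ((k : ℝ) + 1)) ^ 2 ≤
      ndoppeH θ a r *
        ∑ k ∈ range (r + 1), ndoppeWeight θ a k * (((k : ℝ) + 1) * ((k : ℝ) + 2)) := by
  rw [ndoppeH_eq]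
  set T := ∑ k ∈ range (r + 1), ndoppeWeight θ a k
  set B := ∑ k ∈ range (r + 1), ndoppeWeight θ a k * (((k : ℝ) + 1) * ((k : ℝ) + 2))
  have hCS : (∑ k ∈ range (r + 1), ndoppeWeight θ a k * ((k : ℝ) + 1)) ^ 2 ≤ T * B := calc
    _ ≤ T * ∑ k ∈ range (r + 1), ndoppeWeight θ a k * (((k : ℝ) + 1) * ((k : ℝ) + 1 + 1)) :=
      sq_sum_mul_le_sum_mul_sum_mul_add_one _ (fun k _ ↦ ndoppeWeight_nonneg hθ ha k)
        fun k _ ↦ by positivity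
    _ = T * B := by
      congr 1
      exact Finset.sum_congr rfl fun k _ ↦ by ring
  rcases eq_or_ne T 0 with hT | hT
  · simp [hT]
  calc _ ≤ T⁻¹ ^ 2 * (T * B) := by rw [mul_pow]; gcongr
    _ = T⁻¹ * B := by field_simp

end Weights

theorem hasSum_descFactorial_mul_ndoppePMF {θ : ℝ} (hθ0 : 0 < θ) (hθ1 : θ < 1) (a : ℕ → ℝ)
    (r j : ℕ) :
    HasSum (fun x : ℕ ↦ (x.descFactorial j : ℝ) * ndoppePMF θ a r x)
      (ndoppeH θ a r * ((1 - θ) / θ) ^ j *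
        ∑ k ∈ range (r + 1), ndoppeWeight θ a k * (k + 1).ascFactorial j) := by
  have hq : ‖1 - θ‖ < 1 := by
    rw [Real.norm_eq_abs, abs_lt]; constructor <;> linarith
  have hsum := (hasSum_sum (s := range (r + 1)) fun k _ ↦
    (hasSum_descFactorial_mul_choose_mul_geometric hq k j).mul_left (a k * k !)).mul_left
      (ndoppeH θ a r)
  have hval : ndoppeH θ a r * ∑ k ∈ range (r + 1),
      a k * k ! * ((k + 1).ascFactorial j * (1 - θ) ^ j / (1 - (1 - θ)) ^ (k + j + 1)) =
      ndoppeH θ a r * ((1 - θ) / θ) ^ j *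
        ∑ k ∈ range (r + 1), ndoppeWeight θ a k * (k + 1).ascFactorial j := by
    rw [mul_assoc]
    congr 1
    rw [Finset.mul_sum]
    refine Finset.sum_congr rfl fun k _ ↦ ?_
    rw [sub_sub_cancel, ndoppeWeight, div_pow]
    field_simp
    ring
  rw [← hval]
  refine hsum.congr_fun fun x ↦ ?_
  simp only [ndoppePMF, ndoppeP, Finset.mul_sum, Finset.sum_mul]
  exact Finset.sum_congr rfl fun k _ ↦ by ring

theorem hasSum_mul_ndoppePMF {θ : ℝ} (hθ0 : 0 < θ) (hθ1 : θ < 1) (a : ℕ → ℝ) (r : ℕ) :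
    HasSum (fun x : ℕ ↦ (x : ℝ) * ndoppePMF θ a r x)
      (ndoppeH θ a r * ((1 - θ) / θ) *
        ∑ k ∈ range (r + 1), ndoppeWeight θ a k * ((k : ℝ) + 1)) := by
  simpa [Nat.ascFactorial_succ, add_comm] using
    hasSum_descFactorial_mul_ndoppePMF hθ0 hθ1 a r 1

theorem hasSum_sq_mul_ndoppePMF {θ : ℝ} (hθ0 : 0 < θ) (hθ1 : θ < 1) (a : ℕ → ℝ) (r : ℕ) :
    HasSum (fun x : ℕ ↦ (x : ℝ) ^ 2 * ndoppePMF θ a r x)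
      (ndoppeH θ a r * ((1 - θ) / θ) ^ 2 *
          ∑ k ∈ range (r + 1), ndoppeWeight θ a k * (((k : ℝ) + 1) * ((k : ℝ) + 2)) +
        ndoppeH θ a r * ((1 - θ) / θ) *
          ∑ k ∈ range (r + 1), ndoppeWeight θ a k * ((k : ℝ) + 1)) := by
  have hasc (k : ℕ) : ((k + 1).ascFactorial 2 : ℝ) = ((k : ℝ) + 1) * ((k : ℝ) + 2) := by
    simp [Nat.ascFactorial_succ]; ring
  have h₂ := hasSum_descFactorial_mul_ndoppePMF hθ0 hθ1 a r 2
  simp only [hasc, Nat.cast_descFactorial_two] at h₂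
  refine (h₂.add (hasSum_mul_ndoppePMF hθ0 hθ1 a r)).congr_fun fun x ↦ ?_
  ring

theorem ndoppe_over_dispersed (θ : ℝ) (a : ℕ → ℝ) (r : ℕ)
    (hθ0 : 0 < θ) (hθ1 : θ < 1) (ha : ∀ k, 0 ≤ a k)
    (hpos : ∃ k ≤ r, 0 < a k) :
    1 ≤ ((∑' x : ℕ, (x : ℝ) ^ 2 * ndoppePMF θ a r x) -
          (∑' x : ℕ, (x : ℝ) * ndoppePMF θ a r x) ^ 2) /
        (∑' x : ℕ, (x : ℝ) * ndoppePMF θ a r x) := by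
  have hq : 0 < (1 - θ) / θ := div_pos (by linarith) hθ0
  have hmean : 0 < ndoppeH θ a r * ((1 - θ) / θ) *
      ∑ k ∈ range (r + 1), ndoppeWeight θ a k * ((k : ℝ) + 1) :=
    mul_pos (mul_pos (ndoppeH_pos hθ0 ha hpos) hq)
      (sum_ndoppeWeight_mul_pos hθ0 ha hpos fun k ↦ by positivity)
  rw [(hasSum_mul_ndoppePMF hθ0 hθ1 a r).tsum_eq, (hasSum_sq_mul_ndoppePMF hθ0 hθ1 a r).tsum_eq,
    le_div_iff₀ hmean, one_mul]
  linear_combination mul_le_mul_of_nonneg_right (sq_ndoppeH_mul_sum_le hθ0.le ha r)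
    (sq_nonneg ((1 - θ) / θ))
end

section
/- Density of the compound negative binomial–exponential distribution: if N ~ NB(k+1, θ) (pmf C(n+k,n)(1−θ)ⁿθ^{k+1}) and claims are i.i.d. Exp(γ), then S = Σ_{i=1}^N X_i has P(S=0) = θ^{k+1} and density on x > 0 equal to (k+1)γ(1−θ)θ^{k+1}e^{−γx}·₁F₁(k+2; 2; γ(1−θ)x), where ₁F₁(a;b;z) = Σ_{m=0}^∞ ((a)_m/(b)_m)·zᵐ/m! is the confluent hypergeometric function. -/
open Finset

/-- The confluent hypergeometric function ₁F₁(a;b;z) = ∑_{m} ((a)_m/(b)_m) z^m/m!. -/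
noncomputable def hyp1F1 (a b z : ℝ) : ℝ :=
  ∑' m : ℕ,
    ((∏ i ∈ Finset.range m, (a + i)) / (∏ i ∈ Finset.range m, (b + i))) *
      z ^ m / (Nat.factorial m)

/-!
The two series agree term by term: after factoring out `(k+1) γ (1-θ) θ^(k+1) e^(-γx)`, the
`n`-th coefficients match because `(k+1) (k+2)_n = C(n+1+k, n+1) (2)_n`, both sides being
`(n+k+1)! / k!`.
-/

open Nat in
theorem Nat.succ_mul_ascFactorial_eq_choose_mul_ascFactorial (k n : ℕ) :
    (k + 1) * (k + 2).ascFactorial n = (n + 1 + k).choose (n + 1) * (2 : ℕ).ascFactorial n := by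
  have two_ascFactorial : (2 : ℕ).ascFactorial n = (n + 1)! := by
    simpa [add_comm] using factorial_mul_ascFactorial 1 n
  refine Nat.eq_of_mul_eq_mul_left (factorial_pos k) ?_
  calc k ! * ((k + 1) * (k + 2).ascFactorial n)
      = (k + 1) ! * (k + 1 + 1).ascFactorial n := by rw [factorial_succ]; ring
    _ = (n + 1 + k)! := by rw [factorial_mul_ascFactorial]; ring_nf
    _ = k ! * ((n + 1 + k).choose (n + 1) * (2 : ℕ).ascFactorial n) := by
        rw [two_ascFactorial, ← choose_mul_factorial_mul_factorial (le_add_right (n + 1) k),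
          Nat.add_sub_cancel_left]
        ring

theorem prod_range_natCast_add_eq_ascFactorial {R : Type*} [CommSemiring R] (m n : ℕ) :
    ∏ i ∈ range n, ((m : R) + i) = m.ascFactorial n := by
  rw [Nat.ascFactorial_eq_prod_range]; push_cast; rfl

theorem choose_eq_succ_mul_pochhammer_div_pochhammer (k n : ℕ) :
    ((n + 1 + k).choose (n + 1) : ℝ) =
      (k + 1) * (∏ i ∈ range n, ((k : ℝ) + 2 + i)) / ∏ i ∈ range n, ((2 : ℝ) + i) := by
  have hk := prod_range_natCast_add_eq_ascFactorial (R := ℝ) (k + 2) n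
  have h2 := prod_range_natCast_add_eq_ascFactorial (R := ℝ) 2 n
  push_cast at hk h2
  rw [hk, h2, eq_div_iff (by positivity)]
  exact_mod_cast (Nat.succ_mul_ascFactorial_eq_choose_mul_ascFactorial k n).symm

theorem compound_negative_binomial_exponential_general (θ γ : ℝ) (k : ℕ) :
    ((k.choose 0 : ℝ) * (1 - θ) ^ (0 : ℕ) * θ ^ (k + 1) = θ ^ (k + 1)) ∧
    ∀ x : ℝ, 0 < x →
      ∑' n : ℕ,
          (((n + 1 + k).choose (n + 1) : ℝ) * (1 - θ) ^ (n + 1) * θ ^ (k + 1)) *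
            (γ ^ (n + 1) * x ^ n * Real.exp (-γ * x) / (Nat.factorial n)) =
        ((k : ℝ) + 1) * γ * (1 - θ) * θ ^ (k + 1) * Real.exp (-γ * x) *
          hyp1F1 ((k : ℝ) + 2) 2 (γ * (1 - θ) * x) := by
  refine ⟨by simp, fun x _ => ?_⟩
  rw [hyp1F1, ← tsum_mul_left]
  refine tsum_congr fun n => ?_
  rw [choose_eq_succ_mul_pochhammer_div_pochhammer, mul_pow, mul_pow]
  ring

theorem compound_negative_binomial_exponential (θ γ : ℝ) (k : ℕ)
    (hθ0 : 0 < θ) (hθ1 : θ < 1) (hγ : 0 < γ) :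
    ((k.choose 0 : ℝ) * (1 - θ) ^ (0 : ℕ) * θ ^ (k + 1) = θ ^ (k + 1)) ∧
    ∀ x : ℝ, 0 < x →
      ∑' n : ℕ,
          (((n + 1 + k).choose (n + 1) : ℝ) * (1 - θ) ^ (n + 1) * θ ^ (k + 1)) *
            (γ ^ (n + 1) * x ^ n * Real.exp (-γ * x) / (Nat.factorial n)) =
        ((k : ℝ) + 1) * γ * (1 - θ) * θ ^ (k + 1) * Real.exp (-γ * x) *
          hyp1F1 ((k : ℝ) + 2) 2 (γ * (1 - θ) * x) :=
  compound_negative_binomial_exponential_general θ γ k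
end
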